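/- Let δ > 0 be real, t > 0 and x ≥ 0. Then ∫₀^∞ p_t(x, y) dy = 1, where p_t is the BES(δ) transition density; i.e., p_t(x, ·) is a probability density on (0, ∞) for every dimension δ > 0. -/

import Mathlib

open Real MeasureTheory

/-- Imaginary-argument normalized spherical Bessel function `ĵ_ν(z) = j_ν(iz)`. -/
noncomputable def sphBesselI (ν : ℝ) (z : ℝ) : ℝ :=
  Real.Gamma (ν + 1) *
    ∑' m : ℕ, (z / 2) ^ (2 * m) / (Nat.factorial m * Real.Gamma (ν + m + 1))

/-- Transition density `p_t(x,y)` of the `δ`-dimensional Bessel process BES(δ). -/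
noncomputable def besselDensity (δ t x y : ℝ) : ℝ :=
  2 * y ^ (δ - 1) * (2 * t) ^ (-(δ / 2)) / Real.Gamma (δ / 2) *
    sphBesselI (δ / 2 - 1) (x * y / t) * Real.exp (-(x ^ 2 + y ^ 2) / (2 * t))

/-!
Expanding `ĵ_{δ/2-1}` termwise writes `p_t(x, ·)` as a Poisson mixture: with `λ = x² / (2t)`,
`p_t(x, y) = ∑ₙ e^{-λ} λⁿ / n! · q_{δ/2+n}(y)`, where `q_ν`, the `BES(2ν)` density started at `0`,
becomes a Gamma(ν) density under `u = y² / (2t)` and so integrates to `1`. All terms are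
nonnegative, so the integral and the sum commute and the total mass is `∑ₙ e^{-λ} λⁿ / n! = 1`.
-/

open Set

lemma integral_tsum_mul_eq_of_integral_eq_one {α : Type*} [MeasurableSpace α] {μ : Measure α}
    {w : ℕ → ℝ} {s : ℝ} {f : ℕ → α → ℝ} (hw : HasSum w s) (hw0 : ∀ n, 0 ≤ w n)
    (hf : ∀ n, Integrable (f n) μ) (hf0 : ∀ n, 0 ≤ᵐ[μ] f n) (hf1 : ∀ n, ∫ a, f n a ∂μ = 1) :
    ∫ a, ∑' n, w n * f n a ∂μ = s := by
  have hnorm (n : ℕ) : ∫ a, ‖w n * f n a‖ ∂μ = w n :=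
    calc ∫ a, ‖w n * f n a‖ ∂μ = ∫ a, w n * f n a ∂μ :=
          integral_congr_ae <| (hf0 n).mono fun a ha ↦ norm_of_nonneg (mul_nonneg (hw0 n) ha)
      _ = w n := by rw [integral_const_mul, hf1 n, mul_one]
  have hsum := hasSum_integral_of_summable_integral_norm (fun n ↦ (hf n).const_mul (w n))
    (by simpa only [hnorm] using hw.summable)
  simp only [integral_const_mul, hf1, mul_one] at hsum
  exact hsum.unique hw

-- `q_ν = besselDensity (2 * ν) t 0`, the density of `|B_t|` for a `2ν`-dimensional Brownian motion.
noncomputable def chiDensity (ν t y : ℝ) : ℝ :=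
  2 * (2 * t) ^ (-ν) / Gamma ν * y ^ (2 * ν - 1) * exp (-y ^ 2 / (2 * t))

lemma chiDensity_nonneg {ν t y : ℝ} (hν : 0 ≤ ν) (ht : 0 ≤ t) (hy : 0 ≤ y) :
    0 ≤ chiDensity ν t y := by
  have := Gamma_nonneg_of_nonneg hν
  unfold chiDensity
  positivity

lemma chiDensity_eq_const_mul (ν t : ℝ) : chiDensity ν t =
    fun y ↦ 2 * (2 * t) ^ (-ν) / Gamma ν * (y ^ (2 * ν - 1) * exp (-(2 * t)⁻¹ * y ^ (2 : ℝ))) := by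
  ext y
  rw [chiDensity, rpow_two, mul_assoc, neg_mul, ← div_eq_inv_mul, neg_div]

lemma integrableOn_chiDensity {ν t : ℝ} (hν : 0 < ν) (ht : 0 < t) :
    IntegrableOn (chiDensity ν t) (Ioi 0) := by
  rw [chiDensity_eq_const_mul]
  exact (integrableOn_rpow_mul_exp_neg_mul_rpow (by linarith) two_pos (by positivity)).const_mul _

lemma integral_chiDensity {ν t : ℝ} (hν : 0 < ν) (ht : 0 < t) :
    ∫ y in Ioi 0, chiDensity ν t y = 1 := by
  have h2t : 0 < 2 * t := by positivity
  rw [chiDensity_eq_const_mul, integral_const_mul,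
    integral_rpow_mul_exp_neg_mul_rpow two_pos (by linarith) (inv_pos.2 h2t),
    show (2 * ν - 1 + 1) / 2 = ν by ring, show -(2 * ν - 1 + 1) / 2 = -ν by ring,
    inv_rpow h2t.le, ← rpow_neg h2t.le, neg_neg]
  have := (Gamma_pos_of_pos hν).ne'
  have := (rpow_pos_of_pos h2t ν).ne'
  field_simp
  rw [← rpow_add h2t, neg_add_cancel, rpow_zero]

lemma besselDensity_eq_tsum {δ t : ℝ} (x : ℝ) {y : ℝ} (hδ : 0 < δ) (ht : 0 < t) (hy : 0 < y) :
    besselDensity δ t x y = ∑' n : ℕ,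
      exp (-(x ^ 2 / (2 * t))) * (x ^ 2 / (2 * t)) ^ n / n.factorial * chiDensity (δ / 2 + n) t y := by
  have h2t : 0 < 2 * t := by positivity
  rw [besselDensity, sphBesselI, sub_add_cancel, ← tsum_mul_left, ← tsum_mul_left, ← tsum_mul_right]
  refine tsum_congr fun n ↦ ?_
  have hΓ := (Gamma_pos_of_pos (half_pos hδ)).ne'
  have hΓn := (Gamma_pos_of_pos (by positivity : 0 < δ / 2 + n)).ne'
  have ht0 := ht.ne'
  rw [chiDensity, show δ / 2 - 1 + n + 1 = δ / 2 + n by ring,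
    show 2 * (δ / 2 + n) - 1 = δ - 1 + (2 * n : ℕ) by push_cast; ring, rpow_add hy, rpow_natCast,
    neg_add (δ / 2) (n : ℝ), rpow_add h2t, rpow_neg h2t.le (n : ℝ), rpow_natCast,
    show -(x ^ 2 + y ^ 2) / (2 * t) = -(x ^ 2 / (2 * t)) + -y ^ 2 / (2 * t) by ring, exp_add]
  field_simp
  rw [pow_mul, pow_mul, ← mul_pow, ← mul_pow]
  congr 1
  field_simp

theorem besselDensity_integral_one_general
    (δ : ℝ) (hδ : 0 < δ) (t x : ℝ) (ht : 0 < t) :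
    ∫ y in Set.Ioi (0 : ℝ), besselDensity δ t x y = 1 := by
  have hν (n : ℕ) : 0 < δ / 2 + n := by positivity
  rw [setIntegral_congr_fun measurableSet_Ioi fun y hy ↦ besselDensity_eq_tsum x hδ ht hy]
  refine integral_tsum_mul_eq_of_integral_eq_one ?_ (fun n ↦ by positivity)
    (fun n ↦ integrableOn_chiDensity (hν n) ht)
    (fun n ↦ (ae_restrict_mem measurableSet_Ioi).mono fun y hy ↦
      chiDensity_nonneg (hν n).le ht.le (le_of_lt hy))
    (fun n ↦ integral_chiDensity (hν n) ht)
  exact ProbabilityTheory.hasSum_one_poissonMeasure ⟨x ^ 2 / (2 * t), by positivity⟩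

/-- `p_t(x, ·)` is a probability density on `(0, ∞)` for every dimension `δ > 0`. -/
theorem besselDensity_integral_one
    (δ : ℝ) (hδ : 0 < δ) (t x : ℝ) (ht : 0 < t) (hx : 0 ≤ x) :
    ∫ y in Set.Ioi (0 : ℝ), besselDensity δ t x y = 1 :=
  besselDensity_integral_one_general δ hδ t x ht
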